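/- For every ε > 0 there exists a constant C = C(ε) > 0 such that for every r ∈ Ω and every index i ∈ {1,2,3,4} with rᵢ ≥ C, the solid angle satisfies αᵢ(r) ≤ ε. -/
import Mathlib


open Real Finset Filter

/-- `y i = coth r i`. -/
noncomputable def yc (r : Fin 4 → ℝ) (i : Fin 4) : ℝ := Real.cosh (r i) / Real.sinh (r i)

/-- The quantity `Q(r)` whose positivity characterizes non-degenerate hyperbolic tetrahedra. -/
noncomputable def Qh (r : Fin 4 → ℝ) : ℝ :=
  (∑ i, yc r i) ^ 2 - 2 * ∑ i, (yc r i) ^ 2 + 4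

/-- The set of real ball packings of a tetrahedron. -/
noncomputable def OmegaSet : Set (Fin 4 → ℝ) := {r | (∀ i, 0 < r i) ∧ 0 < Qh r}

/-- The `i`-th virtual tetrahedron space `Dᵢ`. -/
noncomputable def Dset (i : Fin 4) : Set (Fin 4 → ℝ) :=
  {r | (∀ m, 0 < r m) ∧
    (∑ j ∈ Finset.univ.erase i, yc r j)
      + 2 * Real.sqrt (((∑ j ∈ Finset.univ.erase i, yc r j) ^ 2
          - ∑ j ∈ Finset.univ.erase i, (yc r j) ^ 2) / 2 + 1) ≤ yc r i}

/-- The dihedral angle `β i j` of the hyperbolic tetrahedron determined by `r`. -/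
noncomputable def betaAngle (r : Fin 4 → ℝ) (i j : Fin 4) : ℝ :=
  Real.arccos
    ((Real.sinh (r i) * Real.sinh (r j)
        * Real.sqrt (∏ m ∈ (Finset.univ.erase i).erase j, Real.sinh (r m)))
      / (4 * Real.sqrt (∏ m ∈ (Finset.univ.erase i).erase j, Real.sinh (r i + r j + r m)))
      * (Qh r - (yc r i + yc r j) ^ 2
          + ((∑ m ∈ (Finset.univ.erase i).erase j, yc r m) ^ 2
              - 4 * ∏ m ∈ (Finset.univ.erase i).erase j, yc r m)))

/-- The solid angle `αᵢ` of the hyperbolic tetrahedron determined by `r`. -/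
noncomputable def solidAngle (r : Fin 4 → ℝ) (i : Fin 4) : ℝ :=
  (∑ j ∈ Finset.univ.erase i, betaAngle r i j) - Real.pi

open Classical in
/-- The extended solid angle `α̃ᵢ`. -/
noncomputable def tildeAlpha (r : Fin 4 → ℝ) (i : Fin 4) : ℝ :=
  if r ∈ OmegaSet then solidAngle r i
  else if r ∈ Dset i then 2 * Real.pi else 0

/-- Given a ball packing `r` on the vertex set `Fin N`, a vertex `i` and a tetrahedron `s`
containing `i`, the associated local packing in `(0,∞)⁴`, with the radius of `i` first. -/
noncomputable def localPacking {N : ℕ} (r : Fin N → ℝ) (i : Fin N) (s : Finset (Fin N)) :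
    Fin 4 → ℝ :=
  fun m => if m = 0 then r i
    else r (((s.erase i).sort (· ≤ ·)).getD (m.val - 1) i)

/-- The extended combinatorial scalar curvature `K̃ᵢ(r)`. -/
noncomputable def Ktilde {N : ℕ} (T3 : Multiset (Finset (Fin N))) (r : Fin N → ℝ)
    (i : Fin N) : ℝ :=
  4 * Real.pi -
    ((T3.filter (fun s => i ∈ s)).map (fun s => tildeAlpha (localPacking r i s) 0)).sum

/-- The tetra-degree of the vertex `i`. -/
def tetraDegree {N : ℕ} (T3 : Multiset (Finset (Fin N))) (i : Fin N) : ℕ :=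
  (T3.filter (fun s => i ∈ s)).card

/-- `R` is a solution of the extended combinatorial Yamabe flow on the time domain `S`. -/
def IsExtYamabeFlowSolution {N : ℕ} (T3 : Multiset (Finset (Fin N)))
    (R : ℝ → Fin N → ℝ) (S : Set ℝ) : Prop :=
  (∀ t ∈ S, ∀ i, 0 < R t i) ∧
  ∀ t ∈ S, ∀ i, HasDerivWithinAt (fun u => R u i)
      (-(Ktilde T3 (R t) i) * Real.sinh (R t i)) S t

/-- The canonical form of the cosine of a dihedral angle, in terms of `y`-coordinates. -/
noncomputable def Xv (a b c d : ℝ) : ℝ :=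
  ((a+b+c+d)^2 - 2*(a^2+b^2+c^2+d^2) + 4 - (a+b)^2 + (c-d)^2) /
    (4 * Real.sqrt ((1+a*b+a*c+b*c)*(1+a*b+a*d+b*d)))

lemma Xv_symm (a b c d : ℝ) : Xv a b c d = Xv a b d c := by
  unfold Xv
  rw [show (1+a*b+a*d+b*d)*(1+a*b+a*c+b*c) = (1+a*b+a*c+b*c)*(1+a*b+a*d+b*d) from by ring]
  ring_nf

lemma one_sub_Xv_sq (a b c d : ℝ) (ha : 1 < a) (hb : 1 < b) (hc : 1 < c) (hd : 1 < d) :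
    1 - (Xv a b c d)^2 = ((a+b+c+d)^2 - 2*(a^2+b^2+c^2+d^2) + 4) * (a+b)^2 /
      (4*((1+a*b+a*c+b*c)*(1+a*b+a*d+b*d))) := by
  have hF3 : (0:ℝ) < 1+a*b+a*c+b*c := by nlinarith
  have hF2 : (0:ℝ) < 1+a*b+a*d+b*d := by nlinarith
  have hg : Real.sqrt ((1+a*b+a*c+b*c)*(1+a*b+a*d+b*d)) ^ 2
      = (1+a*b+a*c+b*c)*(1+a*b+a*d+b*d) := Real.sq_sqrt (by positivity)
  have hgpos : 0 < Real.sqrt ((1+a*b+a*c+b*c)*(1+a*b+a*d+b*d)) :=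
    Real.sqrt_pos.mpr (by positivity)
  rw [Xv, div_pow, mul_pow, hg]
  field_simp
  ring

lemma Xv_neg_one_le (a b c d : ℝ) (ha : 1 < a) (hb : 1 < b) (hc : 1 < c) (hd : 1 < d)
    (hQ : 0 ≤ (a+b+c+d)^2 - 2*(a^2+b^2+c^2+d^2) + 4) :
    -1 ≤ Xv a b c d ∧ Xv a b c d ≤ 1 := by
  have h := one_sub_Xv_sq a b c d ha hb hc hd
  have hF3 : (0:ℝ) < 1+a*b+a*c+b*c := by nlinarith
  have hF2 : (0:ℝ) < 1+a*b+a*d+b*d := by nlinarith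
  have h2 : 0 ≤ 1 - (Xv a b c d)^2 := by
    rw [h]; positivity
  constructor <;> nlinarith [sq_nonneg (Xv a b c d)]

lemma Xv_nonneg (a b c d : ℝ) (ha : 1 < a) (ha3 : a^2 ≤ 3) (hb : 1 < b)
    (hbc : b ≤ c) (hbd : b ≤ d)
    (hQ : 0 ≤ (a+b+c+d)^2 - 2*(a^2+b^2+c^2+d^2) + 4) :
    0 ≤ Xv a b c d := by
  apply div_nonneg _ (by positivity)
  nlinarith [mul_nonneg (by linarith : (0:ℝ) ≤ a + b) (by linarith : (0:ℝ) ≤ c - b),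
    mul_nonneg (by linarith : (0:ℝ) ≤ a + b) (by linarith : (0:ℝ) ≤ d - b),
    sq_nonneg (c - d), mul_pos (by linarith : (0:ℝ) < a + b) (by linarith : (0:ℝ) < b - 1)]

lemma two_le_of_sq (g F : ℝ) (hg : 0 < g) (hs : g^2 = F) (h4 : 4 ≤ F) : 2 ≤ g := by
  nlinarith

lemma four_le_F (x y z : ℝ) (hx : 1 < x) (hy : 1 < y) (hz : 1 < z) :
    4 ≤ 1 + x*y + x*z + y*z := by nlinarith

set_option maxHeartbeats 1000000 in
lemma condA (a b c d : ℝ) (ha : 1 < a) (hb : 1 < b) (hc : 1 < c) (hd : 1 < d)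
    (hQ : 0 < (a+b+c+d)^2 - 2*(a^2+b^2+c^2+d^2) + 4) :
    -((a^2-1)/2) ≤ Xv a b c d + Xv a c b d * Xv a d b c
      - Real.sqrt ((1 - (Xv a c b d)^2) * (1 - (Xv a d b c)^2)) := by
  set Q : ℝ := (a+b+c+d)^2 - 2*(a^2+b^2+c^2+d^2) + 4 with hQdef
  have hF1 : (0:ℝ) < 1+a*c+a*d+c*d := by nlinarith
  have hF2 : (0:ℝ) < 1+a*b+a*d+b*d := by nlinarith
  have hF3 : (0:ℝ) < 1+a*b+a*c+b*c := by nlinarith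
  set F1 : ℝ := 1+a*c+a*d+c*d with hF1d
  set F2 : ℝ := 1+a*b+a*d+b*d with hF2d
  set F3 : ℝ := 1+a*b+a*c+b*c with hF3d
  set g1 : ℝ := Real.sqrt F1 with hg1
  set g2 : ℝ := Real.sqrt F2 with hg2
  set g3 : ℝ := Real.sqrt F3 with hg3
  have hg1p : 0 < g1 := Real.sqrt_pos.mpr hF1
  have hg2p : 0 < g2 := Real.sqrt_pos.mpr hF2
  have hg3p : 0 < g3 := Real.sqrt_pos.mpr hF3
  have hg1s : g1^2 = F1 := Real.sq_sqrt hF1.le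
  have hg2s : g2^2 = F2 := Real.sq_sqrt hF2.le
  have hg3s : g3^2 = F3 := Real.sq_sqrt hF3.le
  have hg1v : g1 = Real.sqrt F1 := hg1
  have hg2v : g2 = Real.sqrt F2 := hg2
  have hg3v : g3 = Real.sqrt F3 := hg3
  clear_value Q F1 F2 F3 g1 g2 g3
  -- numeric bounds
  have hQ4 : Q ≤ 4*F1 := by
    have h : 4*F1 - Q = (a+c+d-b)^2 := by rw [hQdef, hF1d]; ring
    linarith [h, sq_nonneg (a+c+d-b)]
  have h4F2 : 4 ≤ F2 := by rw [hF2d]; exact four_le_F a b d ha hb hd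
  have h4F3 : 4 ≤ F3 := by rw [hF3d]; exact four_le_F a b c ha hb hc
  have hg2four : 2 ≤ g2 := two_le_of_sq g2 F2 hg2p hg2s h4F2
  have hg3four : 2 ≤ g3 := two_le_of_sq g3 F3 hg3p hg3s h4F3
  have hgg : (4:ℝ) ≤ g3*g2 := by
    calc (4:ℝ) = 2*2 := by norm_num
    _ ≤ g3*g2 := mul_le_mul hg3four hg2four (by norm_num) (by linarith)
  have hQD : Q ≤ F1*(g3*g2) := by
    calc Q ≤ 4*F1 := hQ4
    _ = F1*4 := by ring
    _ ≤ F1*(g3*g2) := mul_le_mul_of_nonneg_left hgg hF1.le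
  have hDpos : 0 < F1*(g3*g2) := by positivity
  have ha1 : (0:ℝ) ≤ a^2 - 1 := by nlinarith [ha]
  -- the three cosines
  have e1 : Xv a b c d = (Q - (a+b)^2 + (c-d)^2) / (4*(g3*g2)) := by
    rw [Xv, hg3v, hg2v, ← Real.sqrt_mul hF3.le]
    rw [show (1+a*b+a*c+b*c) * (1+a*b+a*d+b*d) = F3 * F2 from by rw [hF3d, hF2d], ← hQdef]
  have e2 : Xv a c b d = (Q - (a+c)^2 + (b-d)^2) / (4*(g3*g1)) := by
    rw [Xv, hg3v, hg1v, ← Real.sqrt_mul hF3.le]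
    rw [show (1+a*c+a*b+c*b) * (1+a*c+a*d+c*d) = F3 * F1 from by rw [hF3d, hF1d]; ring]
    rw [show (a+c+b+d)^2 - 2*(a^2+c^2+b^2+d^2) + 4 = Q from by rw [hQdef]; ring]
  have e3 : Xv a d b c = (Q - (a+d)^2 + (b-c)^2) / (4*(g2*g1)) := by
    rw [Xv, hg2v, hg1v, ← Real.sqrt_mul hF2.le]
    rw [show (1+a*d+a*b+d*b) * (1+a*d+a*c+d*c) = F2 * F1 from by rw [hF2d, hF1d]; ring]
    rw [show (a+d+b+c)^2 - 2*(a^2+d^2+b^2+c^2) + 4 = Q from by rw [hQdef]; ring]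
  -- the square root term
  have e4 : Real.sqrt ((1 - (Xv a c b d)^2) * (1 - (Xv a d b c)^2))
      = Q*(a+c)*(a+d) / (4*(F1*(g3*g2))) := by
    have h1 : 1 - (Xv a c b d)^2 = Q*(a+c)^2/(4*(F3*F1)) := by
      rw [one_sub_Xv_sq a c b d ha hc hb hd]
      rw [show (1+a*c+a*b+c*b) * (1+a*c+a*d+c*d) = F3 * F1 from by rw [hF3d, hF1d]; ring]
      rw [show (a+c+b+d)^2 - 2*(a^2+c^2+b^2+d^2) + 4 = Q from by rw [hQdef]; ring]
    have h2 : 1 - (Xv a d b c)^2 = Q*(a+d)^2/(4*(F2*F1)) := by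
      rw [one_sub_Xv_sq a d b c ha hd hb hc]
      rw [show (1+a*d+a*b+d*b) * (1+a*d+a*c+d*c) = F2 * F1 from by rw [hF2d, hF1d]; ring]
      rw [show (a+d+b+c)^2 - 2*(a^2+d^2+b^2+c^2) + 4 = Q from by rw [hQdef]; ring]
    rw [h1, h2]
    rw [show Q*(a+c)^2/(4*(F3*F1)) * (Q*(a+d)^2/(4*(F2*F1)))
        = (Q*(a+c)*(a+d) / (4*(F1*(g3*g2))))^2 from by
      rw [← hg1s, ← hg2s, ← hg3s]; field_simp]
    exact Real.sqrt_sq (by positivity)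
  rw [e4, e1, e2, e3]
  have em : (Q - (a+c)^2 + (b-d)^2) / (4*(g3*g1)) * ((Q - (a+d)^2 + (b-c)^2) / (4*(g2*g1)))
      = (Q - (a+c)^2 + (b-d)^2) * (Q - (a+d)^2 + (b-c)^2) / (16*F1*(g3*g2)) := by
    rw [div_mul_div_comm]
    congr 1
    rw [show 4*(g3*g1)*(4*(g2*g1)) = 16*(g1^2)*(g3*g2) from by ring, hg1s]
  rw [em]
  have key : (Q - (a+b)^2 + (c-d)^2) / (4*(g3*g2))
      + (Q - (a+c)^2 + (b-d)^2) * (Q - (a+d)^2 + (b-c)^2) / (16*F1*(g3*g2))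
      - Q*(a+c)*(a+d) / (4*(F1*(g3*g2)))
      = -(Q*(a^2-1)) / (2*(F1*(g3*g2))) := by
    have hgg0 : g3*g2 ≠ 0 := by positivity
    have hF10 : F1 ≠ 0 := ne_of_gt hF1
    field_simp
    rw [hQdef, hF1d]
    ring
  rw [key]
  have h5 : Q*(a^2-1)/(2*(F1*(g3*g2))) ≤ (a^2-1)/2 := by
    rw [div_le_div_iff₀ (by positivity) (by norm_num : (0:ℝ) < 2)]
    have := mul_le_mul_of_nonneg_left hQD ha1
    linarith [this]
  have h6 : -(Q*(a^2-1))/(2*(F1*(g3*g2))) = -(Q*(a^2-1)/(2*(F1*(g3*g2)))) := by ring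
  rw [h6]
  linarith

lemma sinE_lower (E : ℝ) (h0 : 0 < E) (hM : E ≤ 3*π/2) : E/10 ≤ Real.sin (E/2) := by
  rcases le_or_gt E π with h | h
  · have hj := Real.mul_le_sin (x := E/2) (by linarith) (by linarith)
    have hπ : π < 10 := by linarith [Real.pi_lt_d2]
    have h2 : 2/π * (E/2) = E/π := by ring
    rw [h2] at hj
    have h3 : E/10 ≤ E/π := by
      apply div_le_div_of_nonneg_left h0.le Real.pi_pos
      linarith
    linarith
  · have hx0 : 0 ≤ π - E/2 := by linarith
    have hx1 : π - E/2 ≤ π/2 := by linarith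
    have h2 := Real.mul_le_sin hx0 hx1
    rw [Real.sin_pi_sub (E/2)] at h2
    have h3 : 2/π * (π/4) ≤ 2/π * (π - E/2) := by
      apply mul_le_mul_of_nonneg_left (by linarith) (by positivity)
    have h4 : 2/π * (π/4) = 1/2 := by field_simp; norm_num
    have hπ2 : π < 3.15 := Real.pi_lt_d2
    linarith

lemma branch_aux (E σ m : ℝ) (h0 : 0 < E) (hm0 : 0 ≤ m) (hmπ : m ≤ π)
    (hσpos : 0 < σ) (hsm : Real.sin (m - E/2) < σ) :
    m ≤ E/2 + 2*σ ∨ E < 4*σ := by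
  have hπ4 : π < 4 := by linarith [Real.pi_lt_d2]
  have hπpos := Real.pi_pos
  rcases le_or_gt (m - E/2) (π/2) with h | h
  · rcases le_or_gt (m - E/2) 0 with h0' | h0'
    · left; linarith
    · left
      have hj := Real.mul_le_sin (x := m - E/2) h0'.le h
      have hx : 2/π * (m - E/2) < σ := lt_of_le_of_lt hj hsm
      rw [div_mul_eq_mul_div, div_lt_iff₀ hπpos] at hx
      nlinarith [hx, mul_lt_mul_of_pos_left hπ4 hσpos]
  · right
    have hx1 : π - (m - E/2) ≤ π/2 := by linarith
    have hx0 : 0 ≤ π - (m - E/2) := by linarith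
    have hj := Real.mul_le_sin hx0 hx1
    rw [Real.sin_pi_sub (m - E/2)] at hj
    have hx : 2/π * (π - (m - E/2)) < σ := lt_of_le_of_lt hj hsm
    rw [div_mul_eq_mul_div, div_lt_iff₀ hπpos] at hx
    have hge : E/2 ≤ π - (m - E/2) := by linarith
    nlinarith [hx, hge, mul_lt_mul_of_pos_left hπ4 hσpos]

set_option maxHeartbeats 1000000 in
lemma trig_sum (u1 u2 u3 η : ℝ)
    (h1l : -1 ≤ u1) (h1r : u1 ≤ 1) (h2l : -1 ≤ u2) (h2r : u2 ≤ 1)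
    (h3l : -1 ≤ u3) (h3r : u3 ≤ 1) (hu1 : 0 ≤ u1) (hη : 0 < η) (hη1 : η ≤ 1)
    (hA1 : -η ≤ u1 + u2*u3 - Real.sqrt ((1-u2^2)*(1-u3^2)))
    (hA2 : -η ≤ u2 + u1*u3 - Real.sqrt ((1-u1^2)*(1-u3^2)))
    (hA3 : -η ≤ u3 + u1*u2 - Real.sqrt ((1-u1^2)*(1-u2^2))) :
    Real.arccos u1 + Real.arccos u2 + Real.arccos u3 ≤ π + 14*Real.sqrt η := by
  by_contra hcon
  push_neg at hcon
  set β1 := Real.arccos u1 with hb1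
  set β2 := Real.arccos u2 with hb2
  set β3 := Real.arccos u3 with hb3
  have hβ1m : 0 ≤ β1 := Real.arccos_nonneg u1
  have hβ2m : 0 ≤ β2 := Real.arccos_nonneg u2
  have hβ3m : 0 ≤ β3 := Real.arccos_nonneg u3
  have hβ1M : β1 ≤ π := Real.arccos_le_pi u1
  have hβ2M : β2 ≤ π := Real.arccos_le_pi u2
  have hβ3M : β3 ≤ π := Real.arccos_le_pi u3
  have hβ1half : β1 ≤ π/2 := Real.arccos_le_pi_div_two.mpr hu1
  have hcos1 : Real.cos β1 = u1 := Real.cos_arccos h1l h1r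
  have hcos2 : Real.cos β2 = u2 := Real.cos_arccos h2l h2r
  have hcos3 : Real.cos β3 = u3 := Real.cos_arccos h3l h3r
  have hsin1 : Real.sin β1 = Real.sqrt (1-u1^2) := by rw [hb1, Real.sin_arccos]
  have hsin2 : Real.sin β2 = Real.sqrt (1-u2^2) := by rw [hb2, Real.sin_arccos]
  have hsin3 : Real.sin β3 = Real.sqrt (1-u3^2) := by rw [hb3, Real.sin_arccos]
  set E := β1 + β2 + β3 - π with hE
  have hsq : 0 < Real.sqrt η := Real.sqrt_pos.mpr hη
  have hsq1 : Real.sqrt η ≤ 1 := by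
    rw [show (1:ℝ) = Real.sqrt 1 from (Real.sqrt_one).symm]
    exact Real.sqrt_le_sqrt hη1
  have hEgt : 14*Real.sqrt η < E := by rw [hE]; linarith
  have hE0 : 0 < E := by nlinarith
  have hEM : E ≤ 3*π/2 := by rw [hE]; linarith
  have key : ∀ (m k l : ℝ), Real.cos m + Real.cos (k + l) ≥ -η → k + l = π + (E - m) →
      Real.sin (E/2) * Real.sin (m - E/2) ≤ η/2 := by
    intro m k l hge hsum
    rw [hsum] at hge
    have h1 : Real.cos (π + (E - m)) = -Real.cos (E - m) := by
      rw [Real.cos_add, Real.cos_pi, Real.sin_pi]; ring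
    rw [h1] at hge
    have h2 : Real.cos m - Real.cos (E - m) = -2 * Real.sin ((m + (E - m))/2) * Real.sin ((m - (E - m))/2) :=
      Real.cos_sub_cos m (E - m)
    have h3 : (m + (E - m))/2 = E/2 := by ring
    have h4 : (m - (E - m))/2 = m - E/2 := by ring
    rw [h3, h4] at h2
    linarith only [h2, hge]
  have c1 : Real.sin (E/2) * Real.sin (β1 - E/2) ≤ η/2 := by
    apply key β1 β2 β3 _ (by rw [hE]; ring)
    rw [Real.cos_add, hcos1, hcos2, hcos3]
    rw [hsin2, hsin3, ← Real.sqrt_mul (by nlinarith : (0:ℝ) ≤ 1 - u2^2)]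
    linarith only [hA1]
  have c2 : Real.sin (E/2) * Real.sin (β2 - E/2) ≤ η/2 := by
    apply key β2 β1 β3 _ (by rw [hE]; ring)
    rw [Real.cos_add, hcos1, hcos2, hcos3]
    rw [hsin1, hsin3, ← Real.sqrt_mul (by nlinarith : (0:ℝ) ≤ 1 - u1^2)]
    linarith only [hA2]
  have c3 : Real.sin (E/2) * Real.sin (β3 - E/2) ≤ η/2 := by
    apply key β3 β1 β2 _ (by rw [hE]; ring)
    rw [Real.cos_add, hcos1, hcos2, hcos3]
    rw [hsin1, hsin2, ← Real.sqrt_mul (by nlinarith : (0:ℝ) ≤ 1 - u1^2)]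
    linarith only [hA3]
  have hsinE : E/10 ≤ Real.sin (E/2) := sinE_lower E hE0 hEM
  have hbound : ∀ m : ℝ, Real.sin (E/2) * Real.sin (m - E/2) ≤ η/2 →
      Real.sin (m - E/2) ≤ 5*η/E := by
    intro m hm
    rcases le_or_gt (Real.sin (m - E/2)) 0 with h | h
    · have : 0 < 5*η/E := by positivity
      linarith only [h, this]
    · rw [le_div_iff₀ hE0]
      have hp := mul_le_mul_of_nonneg_right hsinE h.le
      linarith only [hp, hm]
  set σ := (5/14)*Real.sqrt η with hσ
  have hσpos : 0 < σ := by positivity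
  have hs5 : 5*η/E < σ := by
    rw [div_lt_iff₀ hE0]
    have hself : Real.sqrt η * Real.sqrt η = η := Real.mul_self_sqrt hη.le
    nlinarith [mul_lt_mul_of_pos_left hEgt hσpos]
  have hbr : ∀ m : ℝ, 0 ≤ m → m ≤ π → Real.sin (E/2) * Real.sin (m - E/2) ≤ η/2 →
      m ≤ E/2 + 2*σ := by
    intro m hm0 hmπ hm
    have hsm : Real.sin (m - E/2) < σ := lt_of_le_of_lt (hbound m hm) hs5
    rcases branch_aux E σ m hE0 hm0 hmπ hσpos hsm with h | h
    · exact h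
    · exfalso
      have h4σ : 4*σ = (10/7)*Real.sqrt η := by rw [hσ]; ring
      linarith only [h, h4σ, hEgt, hsq]
  have h2b : β2 ≤ E/2 + 2*σ := hbr β2 hβ2m hβ2M c2
  have h3b : β3 ≤ E/2 + 2*σ := hbr β3 hβ3m hβ3M c3
  have hσ1 : σ ≤ 5/14 := by rw [hσ]; nlinarith [hsq1, hsq]
  have hπ3 : 3.14 < π := by linarith [Real.pi_gt_d6]
  have hsum : π + E = β1 + β2 + β3 := by rw [hE]; ring
  linarith only [hβ1half, h2b, h3b, hσ1, hπ3, hsum, hE0]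

lemma yc_gt_one (r : Fin 4 → ℝ) (m : Fin 4) (h : 0 < r m) : 1 < yc r m := by
  have hs : 0 < Real.sinh (r m) := Real.sinh_pos_iff.mpr h
  rw [yc, lt_div_iff₀ hs, one_mul]
  nlinarith [Real.cosh_sub_sinh (r m), Real.exp_pos (-(r m))]

lemma sinh_three (x y z : ℝ) (hx : 0 < x) (hy : 0 < y) (hz : 0 < z) :
    Real.sinh (x + y + z) = Real.sinh x * Real.sinh y * Real.sinh z *
      (1 + (Real.cosh x / Real.sinh x) * (Real.cosh y / Real.sinh y)
         + (Real.cosh x / Real.sinh x) * (Real.cosh z / Real.sinh z)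
         + (Real.cosh y / Real.sinh y) * (Real.cosh z / Real.sinh z)) := by
  have hsx := (Real.sinh_pos_iff.mpr hx).ne'
  have hsy := (Real.sinh_pos_iff.mpr hy).ne'
  have hsz := (Real.sinh_pos_iff.mpr hz).ne'
  rw [Real.sinh_add, Real.sinh_add, Real.cosh_add]
  field_simp
  ring

set_option maxHeartbeats 1000000 in
lemma beta_bridge (r : Fin 4 → ℝ) (hr : ∀ m, 0 < r m) (i j k l : Fin 4)
    (hkl : (Finset.univ.erase i).erase j = {k, l}) (hklne : k ≠ l)
    (hQh : Qh r = (yc r i + yc r j + yc r k + yc r l)^2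
        - 2*((yc r i)^2 + (yc r j)^2 + (yc r k)^2 + (yc r l)^2) + 4) :
    betaAngle r i j = Real.arccos (Xv (yc r i) (yc r j) (yc r k) (yc r l)) := by
  set a := yc r i
  set b := yc r j
  set c := yc r k
  set d := yc r l
  have hsi : 0 < Real.sinh (r i) := Real.sinh_pos_iff.mpr (hr i)
  have hsj : 0 < Real.sinh (r j) := Real.sinh_pos_iff.mpr (hr j)
  have hsk : 0 < Real.sinh (r k) := Real.sinh_pos_iff.mpr (hr k)
  have hsl : 0 < Real.sinh (r l) := Real.sinh_pos_iff.mpr (hr l)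
  have ha : 1 < a := yc_gt_one r i (hr i)
  have hb : 1 < b := yc_gt_one r j (hr j)
  have hc : 1 < c := yc_gt_one r k (hr k)
  have hd : 1 < d := yc_gt_one r l (hr l)
  have hF3 : (0:ℝ) < 1+a*b+a*c+b*c := by nlinarith
  have hF2 : (0:ℝ) < 1+a*b+a*d+b*d := by nlinarith
  rw [betaAngle, hkl]
  simp only [Finset.prod_pair hklne, Finset.sum_pair hklne]
  congr 1
  -- rewrite the sinh products
  have hS1 : Real.sinh (r i + r j + r k)
      = Real.sinh (r i) * Real.sinh (r j) * Real.sinh (r k) * (1+a*b+a*c+b*c) := by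
    rw [sinh_three (r i) (r j) (r k) (hr i) (hr j) (hr k)]; rfl
  have hS2 : Real.sinh (r i + r j + r l)
      = Real.sinh (r i) * Real.sinh (r j) * Real.sinh (r l) * (1+a*b+a*d+b*d) := by
    rw [sinh_three (r i) (r j) (r l) (hr i) (hr j) (hr l)]; rfl
  have hprod : Real.sinh (r i + r j + r k) * Real.sinh (r i + r j + r l)
      = (Real.sinh (r i) * Real.sinh (r j))^2 * ((Real.sinh (r k) * Real.sinh (r l))
          * ((1+a*b+a*c+b*c)*(1+a*b+a*d+b*d))) := by
    rw [hS1, hS2]; ring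
  have hsqrt : Real.sqrt (Real.sinh (r i + r j + r k) * Real.sinh (r i + r j + r l))
      = (Real.sinh (r i) * Real.sinh (r j)) * (Real.sqrt (Real.sinh (r k) * Real.sinh (r l))
          * Real.sqrt ((1+a*b+a*c+b*c)*(1+a*b+a*d+b*d))) := by
    rw [hprod, Real.sqrt_mul (by positivity), Real.sqrt_sq (by positivity),
      Real.sqrt_mul (by positivity)]
  rw [hsqrt, Xv, ← hQh, Real.sqrt_mul hsk.le, Real.sqrt_mul hF3.le]
  have h1 : Real.sqrt (Real.sinh (r k)) ≠ 0 := by positivity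
  have h1' : Real.sqrt (Real.sinh (r l)) ≠ 0 := by positivity
  have h2 : Real.sqrt (1+a*b+a*c+b*c) ≠ 0 := by positivity
  have h2' : Real.sqrt (1+a*b+a*d+b*d) ≠ 0 := by positivity
  field_simp
  ring

set_option maxHeartbeats 1000000 in
lemma core_est (ε a b c d : ℝ) (hε : 0 < ε) (ha : 1 < a) (hb : 1 < b) (hc : 1 < c) (hd : 1 < d)
    (hQ : 0 < (a+b+c+d)^2 - 2*(a^2+b^2+c^2+d^2) + 4)
    (hη2 : (a^2-1)/2 ≤ ε^2/196) (hη1 : (a^2-1)/2 ≤ 1) :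
    Real.arccos (Xv a b c d) + Real.arccos (Xv a c b d) + Real.arccos (Xv a d b c) ≤ π + ε := by
  have hηpos : 0 < (a^2-1)/2 := by nlinarith
  have ha3 : a^2 ≤ 3 := by nlinarith
  have hQc : 0 < (a+c+b+d)^2 - 2*(a^2+c^2+b^2+d^2) + 4 := by
    rw [show (a+c+b+d)^2 - 2*(a^2+c^2+b^2+d^2) + 4
      = (a+b+c+d)^2 - 2*(a^2+b^2+c^2+d^2) + 4 from by ring]; exact hQ
  have hQd : 0 < (a+d+b+c)^2 - 2*(a^2+d^2+b^2+c^2) + 4 := by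
    rw [show (a+d+b+c)^2 - 2*(a^2+d^2+b^2+c^2) + 4
      = (a+b+c+d)^2 - 2*(a^2+b^2+c^2+d^2) + 4 from by ring]; exact hQ
  obtain ⟨h1l, h1r⟩ := Xv_neg_one_le a b c d ha hb hc hd hQ.le
  obtain ⟨h2l, h2r⟩ := Xv_neg_one_le a c b d ha hc hb hd hQc.le
  obtain ⟨h3l, h3r⟩ := Xv_neg_one_le a d b c ha hd hb hc hQd.le
  have A1 := condA a b c d ha hb hc hd hQ
  have A2 := condA a c b d ha hc hb hd hQc
  rw [Xv_symm a d c b] at A2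
  have A3 := condA a d b c ha hd hb hc hQd
  rw [Xv_symm a b d c, Xv_symm a c d b] at A3
  -- final conversion 14 √η ≤ ε
  have hfin : 14*Real.sqrt ((a^2-1)/2) ≤ ε := by
    have h := Real.sqrt_le_sqrt hη2
    rw [show ε^2/196 = (ε/14)^2 from by ring, Real.sqrt_sq (by positivity)] at h
    linarith
  rcases le_total b c with h1 | h1
  · rcases le_total b d with h2 | h2
    · -- b is minimal
      have hu1 : 0 ≤ Xv a b c d := Xv_nonneg a b c d ha ha3 hb h1 h2 hQ.le
      have := trig_sum (Xv a b c d) (Xv a c b d) (Xv a d b c) ((a^2-1)/2)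
        h1l h1r h2l h2r h3l h3r hu1 hηpos hη1 A1 A2 A3
      linarith
    · -- d ≤ b ≤ c : d is minimal
      have hu3 : 0 ≤ Xv a d b c := Xv_nonneg a d b c ha ha3 hd h2 (by linarith) hQd.le
      rw [mul_comm (Xv a c b d) (Xv a d b c),
        mul_comm (1 - (Xv a c b d)^2) (1 - (Xv a d b c)^2)] at A1
      rw [mul_comm (Xv a b c d) (Xv a d b c),
        mul_comm (1 - (Xv a b c d)^2) (1 - (Xv a d b c)^2)] at A2
      have := trig_sum (Xv a d b c) (Xv a b c d) (Xv a c b d) ((a^2-1)/2)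
        h3l h3r h1l h1r h2l h2r hu3 hηpos hη1 A3 A1 A2
      linarith
  · rcases le_total c d with h2 | h2
    · -- c ≤ b, c ≤ d : c is minimal
      have hu2 : 0 ≤ Xv a c b d := Xv_nonneg a c b d ha ha3 hc h1 h2 hQc.le
      rw [mul_comm (Xv a b c d) (Xv a c b d),
        mul_comm (1 - (Xv a b c d)^2) (1 - (Xv a c b d)^2)] at A3
      have := trig_sum (Xv a c b d) (Xv a b c d) (Xv a d b c) ((a^2-1)/2)
        h2l h2r h1l h1r h3l h3r hu2 hηpos hη1 A2 A1 A3
      linarith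
    · -- d ≤ c ≤ b : d is minimal
      have hu3 : 0 ≤ Xv a d b c := Xv_nonneg a d b c ha ha3 hd (by linarith) h2 hQd.le
      rw [mul_comm (Xv a c b d) (Xv a d b c),
        mul_comm (1 - (Xv a c b d)^2) (1 - (Xv a d b c)^2)] at A1
      rw [mul_comm (Xv a b c d) (Xv a d b c),
        mul_comm (1 - (Xv a b c d)^2) (1 - (Xv a d b c)^2)] at A2
      have := trig_sum (Xv a d b c) (Xv a b c d) (Xv a c b d) ((a^2-1)/2)
        h3l h3r h1l h1r h2l h2r hu3 hηpos hη1 A3 A1 A2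
      linarith

set_option maxHeartbeats 1000000 in
/-- For every `ε > 0` there is `C > 0` such that for every real tetrahedron and
every vertex whose radius is at least `C`, the solid angle at that vertex is at most `ε`. -/
theorem stmt11 : ∀ ε : ℝ, 0 < ε → ∃ C : ℝ, 0 < C ∧
    ∀ r ∈ OmegaSet, ∀ i : Fin 4, C ≤ r i → solidAngle r i ≤ ε := by
  intro ε hε
  refine ⟨1 + 14/ε, by positivity, ?_⟩
  intro r hrΩ i hCi
  obtain ⟨hpos, hQpos⟩ := hrΩ
  have hy : ∀ m, 1 < yc r m := fun m => yc_gt_one r m (hpos m)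
  -- bounds on the radius
  have h14 : 0 < 14/ε := by positivity
  have hri1 : 1 ≤ r i := by linarith
  have hsinh_ge : r i ≤ Real.sinh (r i) := Real.self_le_sinh_iff.mpr (by linarith)
  have hs1 : 1 ≤ Real.sinh (r i) := by linarith
  have hs14 : 14/ε ≤ Real.sinh (r i) := by linarith
  have hsne : Real.sinh (r i) ≠ 0 := by positivity
  have hysq : (yc r i)^2 - 1 = 1/(Real.sinh (r i))^2 := by
    rw [yc, div_pow]
    rw [div_sub_one (by positivity), Real.cosh_sq_sub_sinh_sq (r i)]
  have hinv : 1/(Real.sinh (r i))^2 ≤ ε^2/196 := by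
    rw [div_le_div_iff₀ (by positivity) (by norm_num : (0:ℝ) < 196)]
    have h := mul_le_mul hs14 hs14 h14.le (by positivity)
    have h2 : (14/ε)*(14/ε) = 196/ε^2 := by field_simp; ring
    rw [h2] at h
    rw [div_le_iff₀ (by positivity)] at h
    nlinarith [h]
  have hinv1 : 1/(Real.sinh (r i))^2 ≤ 1 := by
    rw [div_le_one (by positivity)]
    nlinarith [hs1]
  have hη2 : ((yc r i)^2-1)/2 ≤ ε^2/196 := by
    rw [hysq]
    have : 0 < ε^2/196 := by positivity
    linarith
  have hη1 : ((yc r i)^2-1)/2 ≤ 1 := by rw [hysq]; linarith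
  have hQe : Qh r = (yc r 0 + yc r 1 + yc r 2 + yc r 3)^2
      - 2*((yc r 0)^2 + (yc r 1)^2 + (yc r 2)^2 + (yc r 3)^2) + 4 := by
    rw [Qh, Fin.sum_univ_four, Fin.sum_univ_four]
  have hi : i = 0 ∨ i = 1 ∨ i = 2 ∨ i = 3 := by omega
  rcases hi with h | h | h | h <;> subst h
  · -- i = 0
    rw [solidAngle, show (Finset.univ.erase (0:Fin 4)) = {1,2,3} from by decide,
      Finset.sum_insert (by decide), Finset.sum_insert (by decide), Finset.sum_singleton]
    rw [beta_bridge r hpos 0 1 2 3 (by decide) (by decide) hQe,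
      beta_bridge r hpos 0 2 1 3 (by decide) (by decide) (by rw [hQe]; ring),
      beta_bridge r hpos 0 3 1 2 (by decide) (by decide) (by rw [hQe]; ring)]
    have hcore := core_est ε (yc r 0) (yc r 1) (yc r 2) (yc r 3) hε
      (hy 0) (hy 1) (hy 2) (hy 3) (by rw [← hQe]; exact hQpos) hη2 hη1
    linarith
  · -- i = 1
    have hQe1 : Qh r = (yc r 1 + yc r 0 + yc r 2 + yc r 3)^2
        - 2*((yc r 1)^2 + (yc r 0)^2 + (yc r 2)^2 + (yc r 3)^2) + 4 := by rw [hQe]; ring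
    rw [solidAngle, show (Finset.univ.erase (1:Fin 4)) = {0,2,3} from by decide,
      Finset.sum_insert (by decide), Finset.sum_insert (by decide), Finset.sum_singleton]
    rw [beta_bridge r hpos 1 0 2 3 (by decide) (by decide) hQe1,
      beta_bridge r hpos 1 2 0 3 (by decide) (by decide) (by rw [hQe]; ring),
      beta_bridge r hpos 1 3 0 2 (by decide) (by decide) (by rw [hQe]; ring)]
    have hcore := core_est ε (yc r 1) (yc r 0) (yc r 2) (yc r 3) hε
      (hy 1) (hy 0) (hy 2) (hy 3) (by rw [← hQe1]; exact hQpos) hη2 hη1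
    linarith
  · -- i = 2
    have hQe2 : Qh r = (yc r 2 + yc r 0 + yc r 1 + yc r 3)^2
        - 2*((yc r 2)^2 + (yc r 0)^2 + (yc r 1)^2 + (yc r 3)^2) + 4 := by rw [hQe]; ring
    rw [solidAngle, show (Finset.univ.erase (2:Fin 4)) = {0,1,3} from by decide,
      Finset.sum_insert (by decide), Finset.sum_insert (by decide), Finset.sum_singleton]
    rw [beta_bridge r hpos 2 0 1 3 (by decide) (by decide) (by rw [hQe]; ring),
      beta_bridge r hpos 2 1 0 3 (by decide) (by decide) (by rw [hQe]; ring),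
      beta_bridge r hpos 2 3 0 1 (by decide) (by decide) (by rw [hQe]; ring)]
    have hcore := core_est ε (yc r 2) (yc r 0) (yc r 1) (yc r 3) hε
      (hy 2) (hy 0) (hy 1) (hy 3) (by rw [← hQe2]; exact hQpos) hη2 hη1
    linarith
  · -- i = 3
    have hQe3 : Qh r = (yc r 3 + yc r 0 + yc r 1 + yc r 2)^2
        - 2*((yc r 3)^2 + (yc r 0)^2 + (yc r 1)^2 + (yc r 2)^2) + 4 := by rw [hQe]; ring
    rw [solidAngle, show (Finset.univ.erase (3:Fin 4)) = {0,1,2} from by decide,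
      Finset.sum_insert (by decide), Finset.sum_insert (by decide), Finset.sum_singleton]
    rw [beta_bridge r hpos 3 0 1 2 (by decide) (by decide) (by rw [hQe]; ring),
      beta_bridge r hpos 3 1 0 2 (by decide) (by decide) (by rw [hQe]; ring),
      beta_bridge r hpos 3 2 0 1 (by decide) (by decide) (by rw [hQe]; ring)]
    have hcore := core_est ε (yc r 3) (yc r 0) (yc r 1) (yc r 2) hε
      (hy 3) (hy 0) (hy 1) (hy 2) (by rw [← hQe3]; exact hQpos) hη2 hη1
    linarith
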